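/- arXiv:2311.16189 — 4 statements merged into one kernel-verified Lean document; each statement's English description precedes it below -/
import Mathlib

section
/- Let F be a connected graph. For all integers n ≥ m ≥ 1, ex(n,F)/n ≥ (1 - m/n) · ex(m,F)/m, where ex(k,F) denotes the maximum number of edges of a k-vertex F-free graph. -/
/-!
An `F`-free graph `G` on `m` vertices yields an `F`-free graph on `n` vertices with
`⌊n/m⌋ · e(G)` edges: take `⌊n/m⌋` disjoint copies of `G` and leave the remaining vertices
isolated. Since `F` is connected, a copy of `F` in the disjoint union would lie inside one copy
of `G`. Hence `ex(n,F) ≥ ⌊n/m⌋ ex(m,F) ≥ ((n - m)/m) ex(m,F)`.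
-/

/-- `Contains F G` : `G` has a subgraph isomorphic to `F`. -/
def Contains {α β : Type*} (F : SimpleGraph α) (G : SimpleGraph β) : Prop :=
  ∃ f : α ↪ β, ∀ a b, F.Adj a b → G.Adj (f a) (f b)

/-- Turán number: the maximum number of edges of an `F`-free graph on `n` vertices. -/
noncomputable def exNum {α : Type*} (F : SimpleGraph α) (n : ℕ) : ℕ :=
  sSup {m | ∃ G : SimpleGraph (Fin n), ¬ Contains F G ∧ m = G.edgeSet.ncard}

open Finset Fintype

namespace SimpleGraph

variable {α β V : Type*}

theorem card_edgeFinset_boxProd [Fintype α] [Fintype β] (G : SimpleGraph α) (H : SimpleGraph β)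
    [DecidableRel G.Adj] [DecidableRel H.Adj] [DecidableRel (G □ H).Adj] :
    #(G □ H).edgeFinset = card β * #G.edgeFinset + card α * #H.edgeFinset := by
  have h := (G □ H).sum_degrees_eq_twice_card_edges
  simp only [degree_boxProd, sum_add_distrib] at h
  rw [Fintype.sum_prod_type' (fun a _ ↦ G.degree a),
    Fintype.sum_prod_type_right' (fun _ b ↦ H.degree b)] at h
  simp only [sum_const, card_univ, smul_eq_mul, ← mul_sum, sum_degrees_eq_twice_card_edges] at h
  lia

variable {F : SimpleGraph α}

theorem Connected.isContained_of_isContained_bot_boxProd {G : SimpleGraph V}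
    (hF : F.Connected) (h : F ⊑ (⊥ : SimpleGraph β) □ G) : F ⊑ G := by
  obtain ⟨c⟩ := h
  have hfst : ∀ x y, (c x).1 = (c y).1 := by
    intro x y
    obtain ⟨w⟩ := hF.preconnected x y
    induction w with
    | nil => rfl
    | cons hadj _ ih =>
      obtain ⟨⟨⟩, -⟩ | ⟨-, hxy⟩ := c.toHom.map_adj hadj
      exact hxy.trans ih
  refine ⟨⟨⟨fun x ↦ (c x).2, fun hadj ↦ ?_⟩, fun x y hxy ↦ c.injective (Prod.ext (hfst x y) hxy)⟩⟩
  obtain ⟨⟨⟩, -⟩ | ⟨hadj, -⟩ := c.toHom.map_adj hadj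
  exact hadj

theorem Connected.exists_free_card_edgeFinset_eq_mul (hF : F.Connected) {k m n : ℕ}
    (hm : 0 < m) (hkm : k * m ≤ n) (G : SimpleGraph (Fin m)) [DecidableRel G.Adj]
    (hG : F.Free G) :
    ∃ (B : SimpleGraph (Fin n)) (_ : DecidableRel B.Adj),
      F.Free B ∧ #B.edgeFinset = k * #G.edgeFinset := by
  classical
  let e : Fin k × Fin m ↪ Fin n := finProdFinEquiv.toEmbedding.trans (Fin.castLEEmb hkm)
  -- Freeness is tested in the copies of `G` indexed by all of `ℕ`, into which `Fin n` embeds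
  -- by `x ↦ (x / m, x % m)`; this way the leftover vertices need no separate treatment.
  let π : Fin n ↪ ℕ × Fin m := ⟨fun x ↦ (x / m, ⟨x % m, Nat.mod_lt _ hm⟩), fun x y hxy ↦ by
    simp only [Prod.mk.injEq, Fin.mk.injEq] at hxy
    rw [Fin.ext_iff, ← Nat.div_add_mod x m, ← Nat.div_add_mod y m, hxy.1, hxy.2]⟩
  have hπe : ∀ p, π (e p) = ((p.1 : ℕ), p.2) := by
    rintro ⟨i, a⟩
    refine Prod.ext (?_ : ((a : ℕ) + m * i) / m = i) (Fin.ext (?_ : ((a : ℕ) + m * i) % m = a))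
    · rw [Nat.add_mul_div_left _ _ hm, Nat.div_eq_of_lt a.isLt, zero_add]
    · rw [Nat.add_mul_mod_self_left, Nat.mod_eq_of_lt a.isLt]
  have hle : ((⊥ : SimpleGraph (Fin k)) □ G).map e ≤ ((⊥ : SimpleGraph ℕ) □ G).comap π := by
    rw [map_le_iff_le_comap]
    intro p q hpq
    simpa [hπe, Fin.val_eq_val] using hpq
  refine ⟨((⊥ : SimpleGraph (Fin k)) □ G).map e, inferInstance, fun h ↦ hG ?_, ?_⟩
  · exact hF.isContained_of_isContained_bot_boxProd
      ((h.mono_right hle).trans ⟨(Embedding.comap π _).toCopy⟩)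
  · rw [card_edgeFinset_map, card_edgeFinset_boxProd]
    simp

theorem Connected.div_mul_extremalNumber_le (hF : F.Connected) (m n : ℕ) :
    n / m * extremalNumber m F ≤ extremalNumber n F := by
  rcases Nat.eq_zero_or_pos (n / m) with hk | hk
  · simp [hk]
  have hm : 0 < m := Nat.pos_of_ne_zero (by rintro rfl; simp at hk)
  rw [mul_comm, ← Nat.le_div_iff_mul_le hk]
  suffices h : extremalNumber (card (Fin m)) F ≤ extremalNumber n F / (n / m) by simpa using h
  refine (extremalNumber_le_iff F _).mpr fun G _ hG ↦ (Nat.le_div_iff_mul_le hk).mpr ?_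
  obtain ⟨B, _, hB, hcard⟩ :=
    hF.exists_free_card_edgeFinset_eq_mul hm (Nat.div_mul_le_self n m) G hG
  rw [mul_comm, ← hcard]
  simpa using card_edgeFinset_le_extremalNumber hB

end SimpleGraph

open SimpleGraph

section

variable {α β : Type*} {F : SimpleGraph α}

theorem contains_iff_isContained {G : SimpleGraph β} : Contains F G ↔ F ⊑ G :=
  ⟨fun ⟨f, hf⟩ ↦ ⟨⟨⟨f, hf _ _⟩, f.injective⟩⟩, fun ⟨c⟩ ↦ ⟨c.toEmbedding, fun _ _ ↦ c.toHom.map_adj⟩⟩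

theorem exNum_eq_extremalNumber (F : SimpleGraph α) (n : ℕ) : exNum F n = extremalNumber n F := by
  classical
  have hub : extremalNumber n F ∈
      upperBounds {e | ∃ G : SimpleGraph (Fin n), ¬ Contains F G ∧ e = G.edgeSet.ncard} := by
    rintro _ ⟨G, hG, rfl⟩
    rw [← coe_edgeFinset, Set.ncard_coe_finset]
    simpa using card_edgeFinset_le_extremalNumber (contains_iff_isContained.not.mp hG)
  refine le_antisymm (csSup_le' hub) ?_
  have := (extremalNumber_le_iff (V := Fin n) F (exNum F n)).mpr fun G _ hG ↦ le_csSup ⟨_, hub⟩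
    ⟨G, contains_iff_isContained.not.mpr hG, by rw [← coe_edgeFinset, Set.ncard_coe_finset]⟩
  simpa using this

end

theorem stmt_1 {α : Type*} (F : SimpleGraph α) (hF : F.Connected)
    (m n : ℕ) (hm : 1 ≤ m) (hmn : m ≤ n) :
    (exNum F n : ℝ) / n ≥ (1 - (m : ℝ) / n) * ((exNum F m : ℝ) / m) := by
  have hn : (0 : ℝ) < n := by exact_mod_cast hm.trans hmn
  have hm₀ : (0 : ℝ) < m := by exact_mod_cast hm
  have hblocks : ((n : ℝ) - m) / m ≤ (n / m : ℕ) := by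
    rw [div_le_iff₀ hm₀, sub_le_iff_le_add]
    exact_mod_cast (Nat.lt_div_mul_add hm).le
  have hcopies : ((n / m : ℕ) : ℝ) * extremalNumber m F ≤ extremalNumber n F := by
    exact_mod_cast hF.div_mul_extremalNumber_le m n
  rw [exNum_eq_extremalNumber, exNum_eq_extremalNumber, ge_iff_le]
  calc (1 - (m : ℝ) / n) * (extremalNumber m F / m)
      = ((n : ℝ) - m) / m * extremalNumber m F / n := by field_simp
    _ ≤ (n / m : ℕ) * extremalNumber m F / n := by gcongr
    _ ≤ extremalNumber n F / n := by gcongr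
end

section
/- Let F be a graph on m vertices and t ≥ 0 an integer. Every n-vertex graph G containing no t+1 pairwise vertex-disjoint copies of F satisfies |E(G)| ≤ m·t·Δ(G) + ex(n - m·t, F), where Δ(G) is the maximum degree of G. -/
/-- `DisjointCopies F G t` : `G` contains `t` pairwise vertex-disjoint copies of `F`. -/
def DisjointCopies {α β : Type*} (F : SimpleGraph α) (G : SimpleGraph β) (t : ℕ) : Prop :=
  ∃ f : Fin t → (α ↪ β),
    (∀ i, ∀ a b, F.Adj a b → G.Adj (f i a) (f i b)) ∧
    ∀ i j, i ≠ j → ∀ a b, f i a ≠ f j b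

theorem stmt_2 {α V : Type*} [Fintype α] [Fintype V]
    (F : SimpleGraph α) (G : SimpleGraph V) [DecidableRel G.Adj]
    (m n t : ℕ) (hm : Fintype.card α = m) (hn : Fintype.card V = n)
    (hnt : m * t ≤ n)
    (hfree : ¬ DisjointCopies F G (t + 1)) :
    G.edgeSet.ncard ≤ m * t * G.maxDegree + exNum F (n - m * t) := by
  classical
  set P : ℕ → Prop := fun k => DisjointCopies F G k with hP
  have hP0 : P 0 := ⟨Fin.elim0, fun i => i.elim0, fun i => i.elim0⟩
  set k : ℕ := Nat.findGreatest P t with hkdef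
  have hkt : k ≤ t := Nat.findGreatest_le t
  have hPk : P k := Nat.findGreatest_spec (Nat.zero_le t) hP0
  have hPk1 : ¬ P (k + 1) := by
    rcases eq_or_lt_of_le hkt with h | h
    · rw [h]; exact hfree
    · exact Nat.findGreatest_is_greatest (Nat.lt_succ_self k) h
  obtain ⟨f, hfadj, hfdisj⟩ := hPk
  -- the union of images
  set U0 : Finset V := Finset.univ.biUnion (fun i : Fin k => Finset.univ.image (f i)) with hU0
  have hU0card : U0.card ≤ m * t := by
    calc U0.card ≤ ∑ i : Fin k, (Finset.univ.image (f i)).card := Finset.card_biUnion_le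
    _ ≤ ∑ _i : Fin k, m := by
        apply Finset.sum_le_sum
        intro i _
        calc (Finset.univ.image (f i)).card ≤ (Finset.univ : Finset α).card :=
              Finset.card_image_le
        _ = m := by rw [Finset.card_univ, hm]
    _ = k * m := by simp [mul_comm]
    _ ≤ m * t := by rw [mul_comm]; exact Nat.mul_le_mul_left m hkt
  obtain ⟨U, hU0U, hUcard⟩ := Finset.exists_superset_card_eq hU0card (by rw [hn]; exact hnt)
  have hrangeU : ∀ i : Fin k, ∀ a : α, f i a ∈ U := by
    intro i a
    apply hU0U
    simp only [hU0, Finset.mem_biUnion, Finset.mem_image, Finset.mem_univ, true_and]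
    exact ⟨i, a, rfl⟩
  -- the complement
  have hcard : Fintype.card ↥(Uᶜ : Finset V) = n - m * t := by
    rw [Fintype.card_coe, Finset.card_compl, hUcard, hn]
  set N := n - m * t with hN
  set eqv : ↥(Uᶜ : Finset V) ≃ Fin N := Fintype.equivFinOfCardEq hcard with heqv
  set ι : Fin N → V := fun i => (eqv.symm i : V) with hι
  have hιinj : Function.Injective ι := by
    intro a b hab
    exact eqv.symm.injective (Subtype.ext hab)
  have hιU : ∀ i, ι i ∉ U := fun i => Finset.mem_compl.mp (eqv.symm i).2
  set G' : SimpleGraph (Fin N) := G.comap ι with hG'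
  haveI : DecidableRel G'.Adj := fun a b => by unfold G'; infer_instance
  -- G' is F-free
  have hfreeG' : ¬ Contains F G' := by
    rintro ⟨g, hg⟩
    apply hPk1
    refine ⟨Fin.snoc (fun i => f i) (g.trans ⟨ι, hιinj⟩), ?_, ?_⟩
    · intro i
      refine Fin.lastCases ?_ ?_ i
      · simp only [Fin.snoc_last]
        intro a b hab
        exact hg a b hab
      · intro j
        simp only [Fin.snoc_castSucc]
        exact hfadj j
    · intro i j hij a b h
      rcases Fin.eq_castSucc_or_eq_last i with ⟨i', rfl⟩ | rfl <;>
        rcases Fin.eq_castSucc_or_eq_last j with ⟨j', rfl⟩ | rfl <;>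
        simp only [Fin.snoc_castSucc, Fin.snoc_last, Function.Embedding.trans_apply,
          Function.Embedding.coeFn_mk] at h
      · exact hfdisj i' j' (fun he => hij (by rw [he])) a b h
      · exact hιU (g b) (h ▸ hrangeU i' a)
      · exact hιU (g a) (h.symm ▸ hrangeU j' b)
      · exact hij rfl
  -- counting
  rw [Set.ncard_eq_toFinset_card']
  have hEF : G.edgeSet.toFinset = G.edgeFinset := rfl
  rw [hEF]
  set p : Sym2 V → Prop := fun e => ∃ v ∈ U, v ∈ e with hp
  set A := G.edgeFinset.filter p with hA
  set B := G.edgeFinset.filter (fun e => ¬ p e) with hB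
  have hsplit : A.card + B.card = G.edgeFinset.card :=
    Finset.card_filter_add_card_filter_not p
  have hAcard : A.card ≤ m * t * G.maxDegree := by
    have hsub : A ⊆ U.biUnion (fun v => G.incidenceFinset v) := by
      intro e he
      rw [hA, Finset.mem_filter] at he
      obtain ⟨heE, v, hvU, hve⟩ := he
      rw [Finset.mem_biUnion]
      refine ⟨v, hvU, ?_⟩
      rw [SimpleGraph.mem_incidenceFinset]
      exact ⟨SimpleGraph.mem_edgeFinset.mp heE, hve⟩
    calc A.card ≤ (U.biUnion (fun v => G.incidenceFinset v)).card := Finset.card_le_card hsub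
    _ ≤ ∑ v ∈ U, (G.incidenceFinset v).card := Finset.card_biUnion_le
    _ = ∑ v ∈ U, G.degree v := by
        apply Finset.sum_congr rfl
        intro v _
        exact G.card_incidenceFinset_eq_degree v
    _ ≤ ∑ _v ∈ U, G.maxDegree := Finset.sum_le_sum (fun v _ => G.degree_le_maxDegree v)
    _ = m * t * G.maxDegree := by rw [Finset.sum_const, hUcard, smul_eq_mul]
  have hBcard : B.card ≤ exNum F N := by
    have hsub : B ⊆ G'.edgeFinset.image (Sym2.map ι) := by
      intro e he
      rw [hB, Finset.mem_filter] at he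
      obtain ⟨heE, hnp⟩ := he
      induction e with
      | h u v =>
        have hadj : G.Adj u v := SimpleGraph.mem_edgeFinset.mp heE
        have hu : u ∉ U := fun h => hnp ⟨u, h, Sym2.mem_mk_left u v⟩
        have hv : v ∉ U := fun h => hnp ⟨v, h, Sym2.mem_mk_right u v⟩
        set a : Fin N := eqv ⟨u, Finset.mem_compl.mpr hu⟩ with ha
        set b : Fin N := eqv ⟨v, Finset.mem_compl.mpr hv⟩ with hb
        have hιa : ι a = u := by simp [hι, ha]
        have hιb : ι b = v := by simp [hι, hb]
        rw [Finset.mem_image]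
        refine ⟨s(a, b), ?_, ?_⟩
        · rw [SimpleGraph.mem_edgeFinset]
          show G.Adj (ι a) (ι b)
          rw [hιa, hιb]; exact hadj
        · rw [Sym2.map_pair_eq, hιa, hιb]
    have h1 : B.card ≤ G'.edgeFinset.card :=
      le_trans (Finset.card_le_card hsub) Finset.card_image_le
    have h2 : G'.edgeFinset.card = G'.edgeSet.ncard := (Set.ncard_eq_toFinset_card' _).symm
    have h3 : G'.edgeSet.ncard ≤ exNum F N := by
      apply le_csSup
      · refine ⟨Fintype.card (Sym2 (Fin N)), ?_⟩
        rintro x ⟨H, _, rfl⟩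
        calc H.edgeSet.ncard ≤ (Set.univ : Set (Sym2 (Fin N))).ncard :=
              Set.ncard_le_ncard (Set.subset_univ _) Set.finite_univ
        _ = Fintype.card (Sym2 (Fin N)) := by rw [Set.ncard_univ, Nat.card_eq_fintype_card]
      · exact ⟨G', hfreeG', rfl⟩
    omega
  omega
end

section
/- Let k ≥ 2 and t ≥ 0 be integers, and let n ≥ k(t+1)+1. The graph S^+(k(t+1)−1, n) does not contain t+1 pairwise vertex-disjoint copies of the cycle C_{2k}. -/
/-- The cycle on `n` vertices. -/
def cycGraph (n : ℕ) : SimpleGraph (ZMod n) :=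
  SimpleGraph.fromRel (fun i j => i - j = 1)

/-- `SPlus m n` : clique on the first `m` vertices completely joined to the remaining
`n - m` vertices, plus one extra edge (between vertices `m` and `m+1`). -/
def SPlus (m n : ℕ) : SimpleGraph (Fin n) :=
  SimpleGraph.fromRel (fun u v => (u : ℕ) < m ∨ ((u : ℕ) = m ∧ (v : ℕ) = m + 1))

open Finset

lemma key_count (k m n : ℕ) [NeZero (2*k)] (hk : 2 ≤ k) (g : ZMod (2*k) → Fin n)
    (hinj : Function.Injective g)
    (hadj : ∀ a b, (cycGraph (2*k)).Adj a b → (SPlus m n).Adj (g a) (g b)) :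
    k ≤ (Finset.univ.filter (fun a : ZMod (2*k) => ((g a : Fin n) : ℕ) < m)).card := by
  haveI : Fact (1 < 2*k) := ⟨by omega⟩
  have hcyc : ∀ e : ZMod (2*k), (cycGraph (2*k)).Adj e (e+1) := by
    intro e
    simp only [cycGraph, SimpleGraph.fromRel_adj]
    constructor
    · intro h
      have h1 : (1 : ZMod (2*k)) = 0 := by
        have := congrArg (fun x => x - e) h
        simpa using this.symm
      exact one_ne_zero h1
    · right; ring
  have hedge : ∀ e : ZMod (2*k), (SPlus m n).Adj (g e) (g (e+1)) :=
    fun e => hadj _ _ (hcyc e)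
  have hvalinj : ∀ a b : ZMod (2*k), ((g a : Fin n):ℕ) = ((g b : Fin n):ℕ) → a = b := by
    intro a b h
    exact hinj (Fin.val_injective h)
  have htwo : (2 : ZMod (2*k)) ≠ 0 := by
    intro h4
    have h5 : ((2:ℕ) : ZMod (2*k)) = 0 := by push_cast; exact h4
    rw [ZMod.natCast_eq_zero_iff] at h5
    have := Nat.le_of_dvd (by norm_num) h5
    omega
  have hbadchar : ∀ e : ZMod (2*k), ¬ ((g e : Fin n) : ℕ) < m → ¬ ((g (e+1) : Fin n) : ℕ) < m →
      (((g e : Fin n) : ℕ) = m ∧ ((g (e+1) : Fin n) : ℕ) = m+1) ∨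
      (((g (e+1) : Fin n) : ℕ) = m ∧ ((g e : Fin n) : ℕ) = m+1) := by
    intro e h1 h2
    have h := hedge e
    simp only [SPlus, SimpleGraph.fromRel_adj] at h
    rcases h with ⟨_, h⟩
    tauto
  set P := fun e : ZMod (2*k) => ((g e : Fin n) : ℕ) < m ∨ ((g (e+1) : Fin n) : ℕ) < m with hPdef
  have hbadcard : (Finset.univ.filter (fun e => ¬ P e)).card ≤ 1 := by
    rw [Finset.card_le_one]
    intro e he e' he'
    simp only [Finset.mem_filter, hPdef, not_or] at he he'
    rcases hbadchar e he.2.1 he.2.2 with ⟨hA, hB⟩ | ⟨hA, hB⟩ <;>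
      rcases hbadchar e' he'.2.1 he'.2.2 with ⟨hA', hB'⟩ | ⟨hA', hB'⟩
    · exact hvalinj _ _ (hA.trans hA'.symm)
    · exfalso
      have h1 : e = e' + 1 := hvalinj _ _ (hA.trans hA'.symm)
      have h2 : e + 1 = e' := hvalinj _ _ (hB.trans hB'.symm)
      have h3 : e = e + 1 + 1 := by rw [h2]; exact h1
      exact htwo (by linear_combination -h3)
    · exfalso
      have h1 : e + 1 = e' := hvalinj _ _ (hA.trans hA'.symm)
      have h2 : e = e' + 1 := hvalinj _ _ (hB.trans hB'.symm)
      have h3 : e = e + 1 + 1 := by rw [h1]; exact h2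
      exact htwo (by linear_combination -h3)
    · have h1 : e + 1 = e' + 1 := hvalinj _ _ (hA.trans hA'.symm)
      exact add_right_cancel h1
  have hgoodcard : (Finset.univ.filter P).card ≤
      2 * (Finset.univ.filter (fun a : ZMod (2*k) => ((g a : Fin n) : ℕ) < m)).card := by
    apply Finset.card_le_mul_card_image_of_maps_to
      (f := fun e : ZMod (2*k) => if ((g e : Fin n) : ℕ) < m then e else e + 1)
    · intro e he
      simp only [Finset.mem_filter, hPdef] at he
      by_cases h : ((g e : Fin n) : ℕ) < m
      · rw [if_pos h]; simp [h]
      · rw [if_neg h]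
        have h2 : ((g (e+1) : Fin n) : ℕ) < m := by tauto
        simp [h2]
    · intro b _
      have hsub : (Finset.univ.filter P).filter
          (fun e => (if ((g e : Fin n) : ℕ) < m then e else e + 1) = b) ⊆ {b, b - 1} := by
        intro e he
        simp only [Finset.mem_filter] at he
        rcases he with ⟨_, he⟩
        by_cases h : ((g e : Fin n) : ℕ) < m
        · rw [if_pos h] at he
          simp [he]
        · rw [if_neg h] at he
          have : e = b - 1 := by rw [← he]; ring
          simp [this]
      calc _ ≤ ({b, b - 1} : Finset (ZMod (2*k))).card := Finset.card_le_card hsub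
        _ ≤ 2 := Finset.card_insert_le _ _ |>.trans (by simp)
  have hsplit : (Finset.univ.filter P).card + (Finset.univ.filter (fun e => ¬ P e)).card
      = Fintype.card (ZMod (2*k)) := by
    rw [Finset.card_filter_add_card_filter_not, Finset.card_univ]
  have hcard : Fintype.card (ZMod (2*k)) = 2 * k := ZMod.card _
  omega

theorem stmt_9 (k t n : ℕ) (hk : 2 ≤ k) (hn : k * (t + 1) + 1 ≤ n) :
    ¬ DisjointCopies (cycGraph (2 * k)) (SPlus (k * (t + 1) - 1) n) (t + 1) := by
  rintro ⟨f, hadj, hdisj⟩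
  haveI : NeZero (2*k) := ⟨by omega⟩
  set m := k * (t + 1) - 1 with hm
  have hkm : k ≤ k * (t+1) := Nat.le_mul_of_pos_right k (by omega)
  have hm1 : m + 1 = k * (t + 1) := by omega
  have hCi : ∀ i : Fin (t+1),
      k ≤ (Finset.univ.filter (fun a : ZMod (2*k) => ((f i a : Fin n) : ℕ) < m)).card :=
    fun i => key_count k m n hk (f i) (f i).injective (hadj i)
  set D : Fin (t+1) → Finset (Fin n) :=
    fun i => (Finset.univ.filter (fun a : ZMod (2*k) => ((f i a : Fin n) : ℕ) < m)).image (f i)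
    with hDdef
  have hDcard : ∀ i, k ≤ (D i).card := by
    intro i
    rw [hDdef]
    rw [Finset.card_image_of_injective _ (f i).injective]
    exact hCi i
  have hDsub : ∀ i, D i ⊆ Finset.univ.filter (fun v : Fin n => (v : ℕ) < m) := by
    intro i v hv
    simp only [hDdef, Finset.mem_image, Finset.mem_filter] at hv
    rcases hv with ⟨a, ha, rfl⟩
    simp only [Finset.mem_filter, Finset.mem_univ, true_and]
    exact ha.2
  have hDdisj : ∀ i ∈ Finset.univ, ∀ j ∈ Finset.univ, i ≠ j → Disjoint (D i) (D j) := by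
    intro i _ j _ hij
    rw [Finset.disjoint_left]
    intro v hvi hvj
    simp only [hDdef, Finset.mem_image] at hvi hvj
    rcases hvi with ⟨a, _, rfl⟩
    rcases hvj with ⟨b, _, hb⟩
    exact hdisj i j hij a b hb.symm
  have hM : (Finset.univ.filter (fun v : Fin n => (v : ℕ) < m)).card = m := by
    have h := Finset.card_bij
      (s := Finset.univ.filter (fun v : Fin n => (v : ℕ) < m))
      (t := Finset.range m) (fun (v : Fin n) _ => (v : ℕ)) ?_ ?_ ?_
    · rw [h, Finset.card_range]
    · intro v hv
      simp only [Finset.mem_filter] at hv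
      simp [hv.2]
    · intro a _ b _ hab
      exact Fin.val_injective hab
    · intro x hx
      simp only [Finset.mem_range] at hx
      have hxn : x < n := by omega
      exact ⟨⟨x, hxn⟩, by simp [hx], rfl⟩
  have hunion : (Finset.univ.biUnion D).card = ∑ i, (D i).card :=
    Finset.card_biUnion hDdisj
  have hsub : Finset.univ.biUnion D ⊆ Finset.univ.filter (fun v : Fin n => (v : ℕ) < m) := by
    intro v hv
    simp only [Finset.mem_biUnion] at hv
    rcases hv with ⟨i, _, hv⟩
    exact hDsub i hv
  have h1 : (Finset.univ.biUnion D).card ≤ m := hM ▸ Finset.card_le_card hsub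
  have h2 : (t+1) * k ≤ ∑ i, (D i).card := by
    calc (t+1) * k = ∑ _i : Fin (t+1), k := by simp [mul_comm]
      _ ≤ ∑ i, (D i).card := Finset.sum_le_sum (fun i _ => hDcard i)
  have h3 : (t+1) * k ≤ m := by omega
  have h4 : (t+1) * k = k * (t+1) := by ring
  omega
end

section
/- Let k ≥ 2, t ≥ 0 and n ≥ 2k(t+1). Then ex(n, (t+1)C_{2k}) ≥ C(n,2) − C(n−k(t+1)+1, 2) + 1, where ex(n,(t+1)C_{2k}) denotes the maximum number of edges in an n-vertex graph with no t+1 pairwise vertex-disjoint copies of C_{2k}. -/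
/-- `exDisj F t n` : the maximum number of edges of an `n`-vertex graph containing no
`t + 1` pairwise vertex-disjoint copies of `F`. -/
noncomputable def exDisj {α : Type*} (F : SimpleGraph α) (t n : ℕ) : ℕ :=
  sSup {m | ∃ G : SimpleGraph (Fin n), ¬ DisjointCopies F G (t + 1) ∧ m = G.edgeSet.ncard}

/-! The witness is `S⁺(s, n)` with `s = k(t+1) - 1`: a clique `S` on `s` vertices completely
joined to the remaining vertices, plus a single edge `uv` among those. Its complement is a
clique on `n - s` vertices minus one edge, which gives the edge count. Going around a copy of
`C_{2k}`, two consecutive vertices outside `S` must span the edge `uv`, and a cycle of length at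
least `3` uses each edge once, so at most one step stays outside `S`. Double counting the
positions outside `S` then shows that every copy has at least `k` vertices in `S`, so `t + 1`
disjoint copies would need `k(t+1) > s` vertices of `S`. -/

open Finset SimpleGraph

section SplitGraph

variable {V : Type*}

def splitGraph (S : Finset V) : SimpleGraph V :=
  SimpleGraph.fromRel fun a _ => a ∈ S

@[simp]
lemma splitGraph_adj {S : Finset V} {a b : V} :
    (splitGraph S).Adj a b ↔ a ≠ b ∧ (a ∈ S ∨ b ∈ S) :=
  SimpleGraph.fromRel_adj _ a b

lemma splitGraph_eq_top_sdiff_map (S : Finset V) :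
    splitGraph S = ⊤ \ (⊤ : SimpleGraph {x // x ∉ S}).map (Function.Embedding.subtype _) := by
  ext a b
  simp only [splitGraph_adj, sdiff_adj, top_adj, map_adj, Function.Embedding.subtype_apply]
  constructor
  · rintro ⟨hab, hS⟩
    refine ⟨hab, ?_⟩
    rintro ⟨⟨a', ha'⟩, ⟨b', hb'⟩, -, rfl, rfl⟩
    tauto
  · rintro ⟨hab, hS⟩
    refine ⟨hab, ?_⟩
    by_contra! h
    exact hS ⟨⟨a, h.1⟩, ⟨b, h.2⟩, by simpa using hab, rfl, rfl⟩

lemma ncard_edgeSet_top [Fintype V] :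
    (⊤ : SimpleGraph V).edgeSet.ncard = (Fintype.card V).choose 2 := by
  classical
  rw [← coe_edgeFinset, Set.ncard_coe_finset, card_edgeFinset_top_eq_card_choose_two]

lemma ncard_edgeSet_splitGraph [Fintype V] (S : Finset V) :
    (splitGraph S).edgeSet.ncard =
      (Fintype.card V).choose 2 - (Fintype.card V - #S).choose 2 := by
  classical
  rw [splitGraph_eq_top_sdiff_map, edgeSet_sdiff, Set.ncard_sdiff (edgeSet_mono le_top),
    edgeSet_map, Set.ncard_image_of_injective _ (Function.Embedding.injective _),
    ncard_edgeSet_top, ncard_edgeSet_top, Fintype.card_subtype_compl, Fintype.card_coe]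

lemma ncard_edgeSet_splitGraph_sup_edge [Fintype V] {S : Finset V} {u v : V} (hu : u ∉ S)
    (hv : v ∉ S) (huv : u ≠ v) :
    (splitGraph S ⊔ edge u v).edgeSet.ncard =
      (Fintype.card V).choose 2 - (Fintype.card V - #S).choose 2 + 1 := by
  rw [edgeSet_sup, edgeSet_edge_of_ne huv, Set.union_singleton,
    Set.ncard_insert_of_notMem (by simp [hu, hv]), ncard_edgeSet_splitGraph]

end SplitGraph

lemma cycGraph_adj_add_one {N : ℕ} (hN : 2 ≤ N) (x : ZMod N) : (cycGraph N).Adj (x + 1) x := by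
  have : Fact (1 < N) := ⟨hN⟩
  simp [cycGraph]

lemma two_ne_zero_of_three_le {N : ℕ} (hN : 3 ≤ N) : (2 : ZMod N) ≠ 0 := by
  intro h
  rw [show (2 : ZMod N) = ((2 : ℕ) : ZMod N) by norm_cast, ZMod.natCast_eq_zero_iff] at h
  have := Nat.le_of_dvd two_pos h
  omega

lemma two_mul_card_filter_le {α : Type*} [Fintype α] [DecidableEq α] (σ : Equiv.Perm α)
    (p : α → Prop) [DecidablePred p] :
    2 * #{x | p x} ≤ Fintype.card α + #{x | p x ∧ p (σ x)} := by
  have hσ : #{x | p (σ x)} = #{x | p x} :=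
    card_nbij' σ σ.symm (by simp [Set.MapsTo]) (by simp [Set.MapsTo]) (by simp [Set.LeftInvOn])
      (by simp [Set.RightInvOn, Set.LeftInvOn])
  have hunion : #{x | p x} + #{x | p (σ x)} =
      #(univ.filter p ∪ univ.filter fun x => p (σ x)) + #{x | p x ∧ p (σ x)} := by
    rw [filter_and]
    exact (card_union_add_card_inter _ _).symm
  have := card_le_univ (univ.filter p ∪ univ.filter fun x => p (σ x))
  omega

lemma injective_sym2_mk_add_one {V : Type*} {N : ℕ} (h2 : (2 : ZMod N) ≠ 0) {f : ZMod N → V}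
    (hf : Function.Injective f) : Function.Injective fun x => s(f x, f (x + 1)) := by
  intro x y hxy
  rcases Sym2.eq_iff.mp hxy with ⟨h, -⟩ | ⟨h₁, h₂⟩
  · exact hf h
  · have hx := hf h₁
    have hy := hf h₂
    exact absurd (by linear_combination hy - hx : (2 : ZMod N) = 0) h2

section Cycles

variable {V : Type*} [DecidableEq V] {N : ℕ} [NeZero N] {S : Finset V} {u v : V}

lemma card_consecutive_notMem_le_one (hN : 3 ≤ N) (f : ZMod N ↪ V)
    (hf : ∀ a b, (cycGraph N).Adj a b → (splitGraph S ⊔ edge u v).Adj (f a) (f b)) :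
    #{x | f x ∉ S ∧ f (x + 1) ∉ S} ≤ 1 := by
  calc #{x | f x ∉ S ∧ f (x + 1) ∉ S} ≤ #{s(u, v)} := by
        refine card_le_card_of_injOn (fun x => s(f x, f (x + 1))) ?_
          (injective_sym2_mk_add_one (two_ne_zero_of_three_le hN) f.injective).injOn
        intro x hx
        have hadj := hf _ _ ((cycGraph_adj_add_one (by omega) x).symm)
        simp only [coe_filter, Set.mem_ofPred_eq, mem_univ, true_and] at hx
        simp only [sup_adj, splitGraph_adj, hx.1, hx.2, or_self, and_false, false_or,
          edge_adj] at hadj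
        simp only [coe_singleton, Set.mem_singleton_iff, Sym2.eq_iff]
        exact hadj.1
    _ = 1 := card_singleton _

lemma le_two_mul_card_filter_mem (hN : 3 ≤ N) (f : ZMod N ↪ V)
    (hf : ∀ a b, (cycGraph N).Adj a b → (splitGraph S ⊔ edge u v).Adj (f a) (f b)) :
    N ≤ 2 * #{x | f x ∈ S} + 1 := by
  have houtside : 2 * #{x | f x ∉ S} ≤ N + 1 := by
    have hdouble := two_mul_card_filter_le (Equiv.addRight 1) fun x => f x ∉ S
    rw [ZMod.card] at hdouble
    exact hdouble.trans (Nat.add_le_add_left (card_consecutive_notMem_le_one hN f hf) N)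
  have hsplit := card_filter_add_card_filter_not (s := univ) fun x => f x ∈ S
  rw [card_univ, ZMod.card] at hsplit
  omega

end Cycles

lemma DisjointCopies.mul_le_card {α β : Type*} [Fintype α] [DecidableEq β] {F : SimpleGraph α}
    {G : SimpleGraph β} {r k : ℕ} {S : Finset β} (h : DisjointCopies F G r)
    (hS : ∀ f : α ↪ β, (∀ a b, F.Adj a b → G.Adj (f a) (f b)) → k ≤ #{a | f a ∈ S}) :
    r * k ≤ #S := by
  obtain ⟨f, hadj, hdisj⟩ := h
  let C : Fin r → Finset β := fun i => (univ.filter fun a => f i a ∈ S).map (f i)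
  have hCS : univ.biUnion C ⊆ S := by
    simp only [biUnion_subset, mem_univ, forall_const, C]
    intro i b hb
    obtain ⟨a, ha, rfl⟩ := mem_map.mp hb
    exact (mem_filter.mp ha).2
  have hC : ((univ : Finset (Fin r)) : Set (Fin r)).PairwiseDisjoint C := by
    intro i _ j _ hij
    simp only [Function.onFun, C, Finset.disjoint_left, mem_map]
    rintro _ ⟨a, -, rfl⟩ ⟨b, -, hb⟩
    exact hdisj j i (Ne.symm hij) b a hb
  calc r * k = ∑ _i : Fin r, k := by simp
    _ ≤ ∑ i, #(C i) := sum_le_sum fun i _ => by simpa [C] using hS (f i) (hadj i)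
    _ = #(univ.biUnion C) := (card_biUnion hC).symm
    _ ≤ #S := card_le_card hCS

lemma not_disjointCopies_cycGraph_splitGraph_sup_edge {V : Type*} {k r : ℕ} (hk : 2 ≤ k)
    {S : Finset V} (hS : #S < r * k) (u v : V) :
    ¬ DisjointCopies (cycGraph (2 * k)) (splitGraph S ⊔ edge u v) r := by
  classical
  have : NeZero (2 * k) := ⟨by omega⟩
  intro h
  have := h.mul_le_card (k := k) (S := S) fun f hf => by
    have := le_two_mul_card_filter_mem (by omega) f hf
    omega
  omega

lemma ncard_edgeSet_le_exDisj {α : Type*} {F : SimpleGraph α} {t n : ℕ} {G : SimpleGraph (Fin n)}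
    (hG : ¬ DisjointCopies F G (t + 1)) : G.edgeSet.ncard ≤ exDisj F t n := by
  refine le_csSup ⟨n.choose 2, ?_⟩ ⟨G, hG, rfl⟩
  rintro _ ⟨H, -, rfl⟩
  calc H.edgeSet.ncard ≤ (⊤ : SimpleGraph (Fin n)).edgeSet.ncard :=
        Set.ncard_le_ncard (edgeSet_mono le_top)
    _ = n.choose 2 := by rw [ncard_edgeSet_top, Fintype.card_fin]

theorem stmt_14 (k t n : ℕ) (hk : 2 ≤ k) (hn : 2 * k * (t + 1) ≤ n) :
    exDisj (cycGraph (2 * k)) t n ≥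
      n.choose 2 - (n - k * (t + 1) + 1).choose 2 + 1 := by
  obtain ⟨s, hs⟩ : ∃ s, s + 1 = k * (t + 1) :=
    ⟨k * (t + 1) - 1, Nat.sub_add_cancel (Nat.mul_pos (by omega) (by omega))⟩
  have hsn : 2 * (s + 1) ≤ n := by rwa [hs, ← mul_assoc]
  obtain ⟨u, hu⟩ : ∃ u : Fin n, (u : ℕ) = s := ⟨⟨s, by omega⟩, rfl⟩
  obtain ⟨v, hv⟩ : ∃ v : Fin n, (v : ℕ) = s + 1 := ⟨⟨s + 1, by omega⟩, rfl⟩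
  have hvS : v ∉ Iio u := by simp [Fin.lt_def, hu, hv]
  have huv : u ≠ v := by simp [Fin.ext_iff, hu, hv]
  calc n.choose 2 - (n - k * (t + 1) + 1).choose 2 + 1
      = (splitGraph (Iio u) ⊔ edge u v).edgeSet.ncard := by
        rw [ncard_edgeSet_splitGraph_sup_edge (by simp) hvS huv, Fintype.card_fin, Fin.card_Iio]
        congr 3
        omega
    _ ≤ exDisj (cycGraph (2 * k)) t n := ncard_edgeSet_le_exDisj <|
        not_disjointCopies_cycGraph_splitGraph_sup_edge hk
          (by rw [Fin.card_Iio, hu, mul_comm]; omega) u v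
end
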